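/- arXiv:2103.14759 — 2 statements merged into one kernel-verified Lean document; each statement's English description precedes it below -/
import Mathlib

section
/- The combined fidelity metric (4F−1)/3 = γ·e^{−t/σ} is not isotone as a single routing metric: there exist parameters (γ₁,t₁,σ₁) and (γ₂,t₂,σ₂) with γ₁·e^{−t₁/σ₁} ≥ γ₂·e^{−t₂/σ₂}, and a link extension (γ,t,σ) (which acts by γᵢ ↦ γᵢ·γ, tᵢ ↦ tᵢ+t, 1/σᵢ ↦ 1/σᵢ + 1/σ), such that after extension the order reverses: γ₁·γ·e^{−(t₁+t)/σ₁'} < γ₂·γ·e^{−(t₂+t)/σ₂'} where 1/σᵢ' = 1/σᵢ + 1/σ. -/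
/-!
Extending a path by a link turns its decay exponent `tᵢ/σᵢ` into
`(tᵢ + t) * (1/σᵢ + 1/σ) = tᵢ/σᵢ + tᵢ/σ + t/σᵢ + t/σ`. The cross terms `tᵢ/σ` and `t/σᵢ` depend on
the path, so two paths tied in `γ e^{-t/σ}` are separated by the extension, and the one with the
longer communication time (but slower decoherence) can lose.
-/

theorem exp_neg_extended_lt_of_div_eq {t₁ σ₁ t₂ σ₂ t σ : ℝ} (htie : t₁ / σ₁ = t₂ / σ₂)
    (hsep : t / σ₂ - t / σ₁ < (t₁ - t₂) / σ) :
    Real.exp (-(t₁ + t) * (1/σ₁ + 1/σ)) < Real.exp (-(t₂ + t) * (1/σ₂ + 1/σ)) := by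
  have expand : ∀ tᵢ σᵢ : ℝ, (tᵢ + t) * (1/σᵢ + 1/σ) = tᵢ/σᵢ + tᵢ/σ + t/σᵢ + t/σ := by
    intros; ring
  have hsub : (t₁ - t₂) / σ = t₁ / σ - t₂ / σ := sub_div _ _ _
  rw [Real.exp_lt_exp, neg_mul, neg_mul, neg_lt_neg_iff, expand, expand]
  linarith

theorem combined_fidelity_metric_not_isotone :
    ∃ γ₁ t₁ σ₁ γ₂ t₂ σ₂ γ t σ : ℝ,
      γ₁ ∈ Set.Ioc (0:ℝ) 1 ∧ γ₂ ∈ Set.Ioc (0:ℝ) 1 ∧ γ ∈ Set.Ioc (0:ℝ) 1 ∧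
      0 < t₁ ∧ 0 < t₂ ∧ 0 < t ∧ 0 < σ₁ ∧ 0 < σ₂ ∧ 0 < σ ∧
      γ₁ * Real.exp (-t₁ / σ₁) ≥ γ₂ * Real.exp (-t₂ / σ₂) ∧
      γ₁ * γ * Real.exp (-(t₁ + t) * (1/σ₁ + 1/σ)) <
        γ₂ * γ * Real.exp (-(t₂ + t) * (1/σ₂ + 1/σ)) := by
  have hγ : (1 : ℝ) ∈ Set.Ioc 0 1 := ⟨one_pos, le_rfl⟩
  have htie : (2 : ℝ) / 2 = 1 / 1 := by norm_num
  have hsep : (1 : ℝ) / 1 - 1 / 2 < (2 - 1) / 1 := by norm_num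
  refine ⟨1, 2, 2, 1, 1, 1, 1, 1, 1, hγ, hγ, hγ, two_pos, one_pos, one_pos, two_pos, one_pos,
    one_pos, ?_, ?_⟩
  · rw [neg_div, neg_div, htie]
  · simpa only [one_mul] using exp_neg_extended_lt_of_div_eq htie hsep
end

section
/- Multi-objective shortest-star optimality: given k algebras for trees, each label-isotone with respect to its path parameters, and the dominance relation D (ω D ν iff f^j(ω) ⪯^j f^j(ν) for all j with strict inequality for at least one j), if a star contains a branch path₁ that is not Pareto-optimal, then there exists a star (replacing path₁ with a dominating path) that dominates or equals the original star in every objective. -/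
/-- Dominance relation between paths, measured by the per-objective path weights. -/
def Dominates {k : ℕ} {S : Type*} {W : Fin k → Type*} [∀ j, LinearOrder (W j)]
    (fp : (j : Fin k) → S → W j) (ω ν : S) : Prop :=
  (∀ j, fp j ω ≤ fp j ν) ∧ ∃ j, fp j ω < fp j ν

theorem Dominates.le {k : ℕ} {S : Type*} {W : Fin k → Type*} [∀ j, LinearOrder (W j)]
    {fp : (j : Fin k) → S → W j} {ω ν : S} (h : Dominates fp ω ν) (j : Fin k) :
    fp j ω ≤ fp j ν :=
  h.1 j

theorem multiobjective_shortest_star_general {k : ℕ} {S Ξ : Type*}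
    {W : Fin k → Type*} [∀ j, LinearOrder (W j)]
    (ext : Ξ → S → Ξ)
    (fp : (j : Fin k) → S → W j) (ft : (j : Fin k) → Ξ → W j)
    (hiso : ∀ (j : Fin k) (t : Ξ) (σ₁ σ₂ : S),
      fp j σ₁ ≤ fp j σ₂ → ft j (ext t σ₁) ≤ ft j (ext t σ₂))
    (X : Set S) (path₁ : S)
    (hnotPareto : ∃ p' ∈ X, Dominates fp p' path₁)
    (t : Ξ) :
    ∃ p' ∈ X, Dominates fp p' path₁ ∧
      ∀ j, ft j (ext t p') ≤ ft j (ext t path₁) := by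
  obtain ⟨p', hp', hdom⟩ := hnotPareto
  exact ⟨p', hp', hdom, fun j => hiso j t p' path₁ (hdom.le j)⟩

theorem multiobjective_shortest_star {k : ℕ} {S Ξ : Type*}
    {W : Fin k → Type*} [∀ j, LinearOrder (W j)]
    (ext : Ξ → S → Ξ)
    (fp : (j : Fin k) → S → W j) (ft : (j : Fin k) → Ξ → W j)
    (hiso : ∀ (j : Fin k) (t : Ξ) (σ₁ σ₂ : S),
      fp j σ₁ ≤ fp j σ₂ → ft j (ext t σ₁) ≤ ft j (ext t σ₂))
    (X : Set S) (path₁ : S) (hpath₁ : path₁ ∈ X)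
    (hnotPareto : ∃ p' ∈ X, Dominates fp p' path₁)
    (t : Ξ) :
    ∃ p' ∈ X, Dominates fp p' path₁ ∧
      ∀ j, ft j (ext t p') ≤ ft j (ext t path₁) :=
  multiobjective_shortest_star_general ext fp ft hiso X path₁ hnotPareto t
end
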